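/- arXiv:2007.01175 — 5 statements merged into one kernel-verified Lean document; each statement's English description precedes it below -/
import Mathlib

section
/- (Generating function for the Stirling operators of the second kind.) For a finite set X, every ξ : X → ℝ, every k ≥ 1, and every n ≥ k, the function S(n,k)(ξ^{⊗n}) on X^k equals the coefficient extraction: (n!/k!) times the degree-n part (in ξ, graded by total degree in the entries of ξ) of the symmetric tensor (e^{ξ}−1)^{⊗k}; concretely, S(n,k)(ξ^{⊗n}) = (n!/k!) Σ_{(i₁,…,i_k)∈ℕ_{≥1}^k, i₁+⋯+i_k=n} (1/(i₁!⋯i_k!)) · Sym(ξ^{i₁} ⊗ ⋯ ⊗ ξ^{i_k}), where ξ^{i}(x) = ξ(x)^{i} and Sym denotes symmetrization in the k variables. -/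
open Finset

section Defs

variable {X : Type*} [Fintype X] [DecidableEq X]

/-- The falling factorial measure `(ω)_n` on `X^n`, given by the density
`(ω)_n(y₁,…,y_n) = ω(y₁)(ω(y₂)−δ_{y₁}(y₂))⋯(ω(y_n)−δ_{y₁}(y_n)−⋯−δ_{y_{n−1}}(y_n))`. -/
noncomputable def ff (ω : X → ℝ) : (n : ℕ) → (Fin n → X) → ℝ
  | 0 => fun _ => 1
  | n + 1 => fun y =>
      ff ω n (fun i => y i.castSucc) *
        (ω (y (Fin.last n)) - ∑ i : Fin n, if y i.castSucc = y (Fin.last n) then (1 : ℝ) else 0)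

/-- Dirac measure at `x`. -/
noncomputable def diracMeas (x : X) : X → ℝ := fun a => if a = x then 1 else 0

/-- The measure `δ_{x₁}+⋯+δ_{x_k}` of a multiset `[x₁,…,x_k]`. -/
noncomputable def msMeas {k : ℕ} (x : Fin k → X) : X → ℝ :=
  fun a => ((Finset.univ.filter (fun i => x i = a)).card : ℝ)

/-- Integration `⟨μ, f⟩` of a function against a measure on `X^n`. -/
noncomputable def pairing (n : ℕ) (μ f : (Fin n → X) → ℝ) : ℝ :=
  ∑ y : Fin n → X, μ y * f y

/-- Symmetrization of a function/measure on `X^n`. -/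
noncomputable def symmFun (n : ℕ) (μ : (Fin n → X) → ℝ) : (Fin n → X) → ℝ :=
  fun y => (∑ π : Equiv.Perm (Fin n), μ (y ∘ π)) / n.factorial

/-- Tensor product of measures/functions on `X^k` and `X^m`. -/
noncomputable def tensFun {k m : ℕ} (μ : (Fin k → X) → ℝ) (ν : (Fin m → X) → ℝ) :
    (Fin (k + m) → X) → ℝ :=
  fun y => μ (fun i => y (Fin.castAdd m i)) * ν (fun j => y (Fin.natAdd k j))

/-- Re-indexing along an equality of dimensions. -/
def castFun {m n : ℕ} (h : m = n) (μ : (Fin m → X) → ℝ) : (Fin n → X) → ℝ :=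
  fun y => μ (fun i => y (Fin.cast h i))

/-- The product measure `ω^{⊗n}` (and likewise the tensor power `ξ^{⊗n}` of a function). -/
noncomputable def prodMeas (ω : X → ℝ) (n : ℕ) : (Fin n → X) → ℝ :=
  fun y => ∏ i, ω (y i)

/-- A function on `X^n` is symmetric. -/
def IsSymmFun {n : ℕ} (f : (Fin n → X) → ℝ) : Prop :=
  ∀ (π : Equiv.Perm (Fin n)) (y : Fin n → X), f (y ∘ π) = f y

end Defs

/-- The set of surjections `Fin n → Fin k`; these correspond to set partitions of
`{1,…,n}` into `k` nonempty blocks together with an ordering of the blocks. -/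
noncomputable def surjs (n k : ℕ) : Finset (Fin n → Fin k) :=
  Finset.univ.filter (fun g => Function.Surjective g)

/-- Cardinality of the fiber `g⁻¹(i)` (the size of block `i`). -/
def fiberCard {n k : ℕ} (g : Fin n → Fin k) (i : Fin k) : ℕ :=
  (Finset.univ.filter (fun j => g j = i)).card

section Ops

variable {X : Type*} [Fintype X] [DecidableEq X]

/-- Stirling operator of the second kind `S(n,k) = Σ_{λ ∈ UP(n,k)} D_λ`:
summing the substitute-and-symmetrize operators over unordered partitions of `{1,…,n}`
into `k` nonempty blocks is the same as summing `f(y ∘ g)` over the surjections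
`g : Fin n → Fin k` and dividing by `k!`. -/
noncomputable def Sop (n k : ℕ) (f : (Fin n → X) → ℝ) : (Fin k → X) → ℝ :=
  fun y => (∑ g ∈ surjs n k, f (y ∘ g)) / k.factorial

/-- Unsigned Stirling operator of the first kind
`c(n,k) = Σ_{λ={λ₁,…,λ_k} ∈ UP(n,k)} (|λ₁|−1)!⋯(|λ_k|−1)! · D_λ`. -/
noncomputable def cop (n k : ℕ) (f : (Fin n → X) → ℝ) : (Fin k → X) → ℝ :=
  fun y => (∑ g ∈ surjs n k, (∏ i : Fin k, ((fiberCard g i - 1).factorial : ℝ)) * f (y ∘ g)) /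
    k.factorial

/-- Stirling operator of the first kind `s(n,k) = (−1)^{n−k} c(n,k)`. -/
noncomputable def sop (n k : ℕ) (f : (Fin n → X) → ℝ) : (Fin k → X) → ℝ :=
  fun y => (-1 : ℝ) ^ (n - k) * cop n k f y

/-- Lah operator `L(n,k) = Σ_{λ={λ₁,…,λ_k} ∈ UP(n,k)} |λ₁|!⋯|λ_k|! · D_λ`. -/
noncomputable def Lop (n k : ℕ) (f : (Fin n → X) → ℝ) : (Fin k → X) → ℝ :=
  fun y => (∑ g ∈ surjs n k, (∏ i : Fin k, ((fiberCard g i).factorial : ℝ)) * f (y ∘ g)) /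
    k.factorial

end Ops

/-
A surjection `g : Fin n → Fin k` contributes `∏ t, ξ (y (g t)) = ∏ j, ξ (y j) ^ |g⁻¹ j|`, so
grouping surjections by their fibre sizes `i` (a composition of `n` into `k` positive parts) gives
`∑_g ∏ t, ξ (y (g t)) = ∑_i (n! / ∏ j, i j!) ∏ j, ξ (y j) ^ i j`, since `n! / ∏ j, i j!` functions
have fibre sizes `i`. The symmetrization costs nothing: `g ↦ π ∘ g` permutes the surjections, so
each of the `k!` permutations `π` yields the same sum.
-/

theorem prod_comp_eq_prod_pow_fiberCard {M : Type*} [CommMonoid M] {n k : ℕ}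
    (c : Fin k → M) (g : Fin n → Fin k) :
    ∏ t, c (g t) = ∏ j, c j ^ fiberCard g j := by
  rw [← prod_fiberwise univ g]
  refine prod_congr rfl fun j _ => ?_
  rw [prod_congr rfl fun t ht => by rw [(mem_filter.1 ht).2], prod_const]
  rfl

/- Both sides are the coefficient of `∏ j, X j ^ i j` in `(∑ j, X j) ^ n`, expanded once as
`∑ g, ∏ t, X (g t)` and once by the multinomial theorem. -/
open MvPolynomial in
theorem card_filter_fiberCard_eq_multinomial {n k : ℕ} (i : Fin k → ℕ) (hi : ∑ j, i j = n) :
    #{g : Fin n → Fin k | ∀ j, fiberCard g j = i j} = Nat.multinomial univ i := by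
  set d := Finsupp.equivFunOnFinite.symm i
  have hexp : (∑ j, X j : MvPolynomial (Fin k) ℕ) ^ n
      = ∑ g : Fin n → Fin k, ∏ j, X j ^ fiberCard g j := by
    rw [← Fin.prod_const, prod_univ_sum]
    simp [prod_comp_eq_prod_pow_fiberCard]
  have hsum : d.sum (fun _ m => m) = n := by
    rw [Finsupp.sum_fintype _ _ fun _ => rfl]; exact hi
  have hcoeff := coeff_sum_X_pow_of_fintype (R := ℕ) d n
  rw [hsum, if_pos rfl, Finsupp.multinomial_eq_of_support_subset (subset_univ _), hexp,
    coeff_sum] at hcoeff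
  simp only [coeff_prod_X_pow, sum_boole, Nat.cast_id] at hcoeff
  convert hcoeff using 3
  · simp [Finsupp.ext_iff, d, eq_comm]
  · rfl

theorem sum_fiberCard {n k : ℕ} (g : Fin n → Fin k) : ∑ j, fiberCard g j = n := by
  simpa [fiberCard] using (card_eq_sum_card_fiberwise (f := g) (s := univ) (t := univ)
    fun _ _ => mem_univ _).symm

theorem surjective_iff_one_le_fiberCard {n k : ℕ} (g : Fin n → Fin k) :
    Function.Surjective g ↔ ∀ j, 1 ≤ fiberCard g j := by
  simp [fiberCard, Nat.one_le_iff_ne_zero, Function.Surjective]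

theorem sum_surjs_prod_eq_sum_multinomial {R : Type*} [CommSemiring R] {n k : ℕ}
    (c : Fin k → R) :
    ∑ g ∈ surjs n k, ∏ t, c (g t)
      = ∑ i ∈ (Nat.antidiagonalTuple k n).filter (fun i => ∀ j, 1 ≤ i j),
          Nat.multinomial univ i * ∏ j, c j ^ i j := by
  have hmaps : ∀ g ∈ surjs n k,
      fiberCard g ∈ (Nat.antidiagonalTuple k n).filter (fun i => ∀ j, 1 ≤ i j) := by
    intro g hg
    simp only [surjs, mem_filter, mem_univ, true_and] at hg
    exact mem_filter.2 ⟨Nat.mem_antidiagonalTuple.2 (sum_fiberCard g),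
      (surjective_iff_one_le_fiberCard g).1 hg⟩
  rw [← sum_fiberwise_of_maps_to hmaps]
  refine sum_congr rfl fun i hi => ?_
  obtain ⟨hi_sum, hi_pos⟩ := mem_filter.1 hi
  have hfiber : {g ∈ surjs n k | fiberCard g = i}
      = ({g | ∀ j, fiberCard g j = i j} : Finset (Fin n → Fin k)) := by
    ext g
    simp only [surjs, filter_filter, mem_filter, mem_univ, true_and,
      surjective_iff_one_le_fiberCard, funext_iff]
    exact ⟨And.right, fun h => ⟨fun j => h j ▸ hi_pos j, h⟩⟩
  rw [hfiber, ← card_filter_fiberCard_eq_multinomial i (Nat.mem_antidiagonalTuple.1 hi_sum),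
    ← nsmul_eq_mul, ← sum_const]
  refine sum_congr rfl fun g hg => ?_
  rw [prod_comp_eq_prod_pow_fiberCard, funext (mem_filter.1 hg).2]

theorem sum_surjs_comp_perm {M : Type*} [AddCommMonoid M] {n k : ℕ} (π : Equiv.Perm (Fin k))
    (F : (Fin n → Fin k) → M) :
    ∑ g ∈ surjs n k, F (π ∘ g) = ∑ g ∈ surjs n k, F g :=
  sum_equiv ((Equiv.refl _).arrowCongr π)
    (fun g => by
      simp only [surjs, mem_filter, mem_univ, true_and]
      exact (EquivLike.comp_surjective g π).symm)
    fun _ _ => rfl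

theorem sum_surjs_prod_eq_factorial_mul {n k : ℕ} (c : Fin k → ℝ) :
    ∑ g ∈ surjs n k, ∏ t, c (g t)
      = n.factorial * ∑ i ∈ (Nat.antidiagonalTuple k n).filter (fun i => ∀ j, 1 ≤ i j),
          (1 / ∏ j, ((i j).factorial : ℝ)) * ∏ j, c j ^ i j := by
  rw [sum_surjs_prod_eq_sum_multinomial, mul_sum]
  refine sum_congr rfl fun i hi => ?_
  have hspec := Nat.multinomial_spec univ i
  rw [Nat.mem_antidiagonalTuple.1 (mem_filter.1 hi).1] at hspec
  have hpos : (∏ j, ((i j).factorial : ℝ)) ≠ 0 := by positivity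
  rw [← hspec, Nat.cast_mul, Nat.cast_prod]
  field_simp

theorem stirling_second_generating_function_general
    {X : Type*} [Fintype X] [DecidableEq X] {k n : ℕ}
    (ξ : X → ℝ) (y : Fin k → X) :
    Sop n k (fun v : Fin n → X => ∏ t, ξ (v t)) y
      = ((n.factorial : ℝ) / (k.factorial : ℝ)) *
          ∑ i ∈ (Finset.Nat.antidiagonalTuple k n).filter (fun i => ∀ j, 1 ≤ i j),
            (1 / ∏ j, ((i j).factorial : ℝ)) *
              ((∑ π : Equiv.Perm (Fin k), ∏ j, ξ (y (π j)) ^ (i j)) / (k.factorial : ℝ)) := by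
  have hexpand (π : Equiv.Perm (Fin k)) : ∑ g ∈ surjs n k, ∏ t, ξ (y (g t))
      = n.factorial * ∑ i ∈ (Nat.antidiagonalTuple k n).filter (fun i => ∀ j, 1 ≤ i j),
          (1 / ∏ j, ((i j).factorial : ℝ)) * ∏ j, ξ (y (π j)) ^ i j := by
    rw [← sum_surjs_comp_perm π]
    exact sum_surjs_prod_eq_factorial_mul (n := n) fun j => ξ (y (π j))
  calc Sop n k (fun v : Fin n → X => ∏ t, ξ (v t)) y
      = (∑ g ∈ surjs n k, ∏ t, ξ (y (g t))) / k.factorial := rfl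
    _ = (∑ _π : Equiv.Perm (Fin k), ∑ g ∈ surjs n k, ∏ t, ξ (y (g t)))
          / k.factorial / k.factorial := by
        rw [sum_const, card_univ, Fintype.card_perm, Fintype.card_fin, nsmul_eq_mul]
        field_simp
    _ = _ := by
        rw [sum_congr rfl fun π _ => hexpand π, ← mul_sum, sum_comm]
        simp only [mul_sum, sum_div]
        exact sum_congr rfl fun _ _ => sum_congr rfl fun _ _ => by ring

/-- generating function of the Stirling operators of the second kind:
`S(n,k)(ξ^{⊗n}) = (n!/k!) Σ_{i₁+⋯+i_k=n, i_j≥1} (1/(i₁!⋯i_k!)) Sym(ξ^{i₁} ⊗ ⋯ ⊗ ξ^{i_k})`. -/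
theorem stirling_second_generating_function
    {X : Type*} [Fintype X] [DecidableEq X] {k n : ℕ} (hk : 1 ≤ k) (hkn : k ≤ n)
    (ξ : X → ℝ) (y : Fin k → X) :
    Sop n k (fun v : Fin n → X => ∏ t, ξ (v t)) y
      = ((n.factorial : ℝ) / (k.factorial : ℝ)) *
          ∑ i ∈ (Finset.Nat.antidiagonalTuple k n).filter (fun i => ∀ j, 1 ≤ i j),
            (1 / ∏ j, ((i j).factorial : ℝ)) *
              ((∑ π : Equiv.Perm (Fin k), ∏ j, ξ (y (π j)) ^ (i j)) / (k.factorial : ℝ)) :=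
  stirling_second_generating_function_general ξ y
end

section
/- (Infinite-dimensional Grünert formula, finite setting.) Let X be a finite set and consider the polynomial algebra P of functions of a finitely supported signed measure ω on X. For ξ : X → ℝ define the operator ⟨ω, ξ∂⟩ on P acting on monomials by ⟨ω, ξ∂⟩⟨ω^{⊗n}, f⟩ = ⟨ω^{⊗n}, N(ξ)f⟩ where (N(ξ)f)(x₁,…,x_n) = f(x₁,…,x_n)(ξ(x₁)+⋯+ξ(x_n)). Then for ξ₁,…,ξ_n : X → ℝ, the composition ⟨ω,ξ₁∂⟩⋯⟨ω,ξ_n∂⟩ applied to a monomial ⟨ω^{⊗m}, φ^{⊗m}⟩ equals Σ_{k=1}^{n} (m)_k ⟨ω^{⊗m}, ((S(n,k)(ξ₁⊙⋯⊙ξ_n))·φ^{⊗k}) ⊙ φ^{⊗(m−k)}⟩, where (m)_k is the falling factorial number m(m−1)⋯(m−k+1). Equivalently: ⟨ω,ξ₁∂⟩⋯⟨ω,ξ_n∂⟩ = Σ_{k=1}^{n} ⟨ω^{⊗k}, (S(n,k)(ξ₁⊙⋯⊙ξ_n))∂^{⊗k}⟩ as operators on polynomials in ω. -/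
open Finset

/-! Expanding `∏ⱼ ∑ᵢ ξⱼ(yᵢ)` writes the left side as a sum, over all maps `f : Fin n → Fin m`,
of the integral of `∏ⱼ ξⱼ(y_{f j})` against `(ωφ)^{⊗m}`. A map whose image `s` has `k` elements
factors uniquely as `ιₛ ∘ g` with `g : Fin n → Fin k` surjective and `ιₛ` the increasing
enumeration of `s`. The product measure is invariant under permutations of the coordinates,
so the integral does not depend on `s`, and the `m.choose k = (m)ₖ / k!` choices of `s` produce
the `k`-th term on the right, since `S(n,k)` is the sum over surjections divided by `k!`. -/

open Function

theorem prod_range_natCast_sub_eq_descFactorial {R : Type*} [CommRing R] (m k : ℕ) :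
    ∏ t ∈ range k, ((m : R) - t) = m.descFactorial k := by
  rw [← descPochhammer_eval_eq_prod_range, descPochhammer_eval_eq_descFactorial]

section Surjections

variable {M : Type*} [AddCommMonoid M]

theorem sum_eq_sum_Icc_card_image {α β : Type*} [Fintype α] [DecidableEq α] [Nonempty α]
    [Fintype β] [DecidableEq β] (T : (α → β) → M) :
    ∑ f, T f = ∑ k ∈ Icc 1 (Fintype.card α), ∑ f with #(univ.image f) = k, T f := by
  refine (sum_fiberwise_of_maps_to (fun f _ => ?_) T).symm
  exact mem_Icc.mpr ⟨card_pos.mpr (univ_nonempty.image f), card_image_le⟩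

theorem sum_image_eq_sum_surjs {n m k : ℕ} (T : (Fin n → Fin m) → M) (s : Finset (Fin m))
    (hs : #s = k) :
    ∑ f with univ.image f = s, T f = ∑ g ∈ surjs n k, T (s.orderEmbOfFin hs ∘ g) := by
  set ι := s.orderEmbOfFin hs
  have hrange : ∀ x, x ∈ s ↔ ∃ a, ι a = x := fun x => by
    rw [← mem_coe, ← s.range_orderEmbOfFin hs]; rfl
  symm
  refine sum_bij (fun g _ => ι ∘ g) (fun g hg => ?_) (fun g₁ _ g₂ _ h => ι.injective.comp_left h)
    (fun f hf => ?_) (fun _ _ => rfl)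
  · have hg : Surjective g := (mem_filter.mp hg).2
    refine mem_filter.mpr ⟨mem_univ _, ?_⟩
    ext x
    simp only [mem_image, mem_univ, true_and, comp_apply, hrange]
    exact ⟨fun ⟨j, hj⟩ => ⟨g j, hj⟩, fun ⟨a, ha⟩ => by obtain ⟨j, rfl⟩ := hg a; exact ⟨j, ha⟩⟩
  · have himage : univ.image f = s := (mem_filter.mp hf).2
    have hmem : ∀ j, ∃ a, ι a = f j := fun j =>
      (hrange _).mp (himage ▸ mem_image_of_mem f (mem_univ j))
    choose g hg using hmem
    refine ⟨g, mem_filter.mpr ⟨mem_univ _, fun a => ?_⟩, funext hg⟩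
    obtain ⟨j, -, hj⟩ := mem_image.mp (himage ▸ (hrange (ι a)).mpr ⟨a, rfl⟩)
    exact ⟨j, ι.injective ((hg j).trans hj)⟩

theorem sum_card_image_eq_choose_smul {n m k : ℕ} (T : (Fin n → Fin m) → M)
    (hT : ∀ ι ι' : Fin k → Fin m, Injective ι → Injective ι' →
      ∀ g : Fin n → Fin k, T (ι ∘ g) = T (ι' ∘ g))
    (hkm : k ≤ m) :
    ∑ f with #(univ.image f) = k, T f = m.choose k • ∑ g ∈ surjs n k, T (Fin.castLE hkm ∘ g) := by
  have hfiber : ∀ s ∈ powersetCard k (univ : Finset (Fin m)),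
      ∑ f with #(univ.image f) = k ∧ univ.image f = s, T f =
        ∑ g ∈ surjs n k, T (Fin.castLE hkm ∘ g) := fun s hs => by
    have hs : #s = k := (mem_powersetCard.mp hs).2
    rw [filter_congr fun f _ => and_iff_right_of_imp fun h => h ▸ hs, sum_image_eq_sum_surjs T s hs]
    exact sum_congr rfl fun g _ =>
      hT _ _ (s.orderEmbOfFin hs).injective (Fin.castLE_injective hkm) g
  rw [← sum_fiberwise_of_maps_to (g := fun f => univ.image f) (t := powersetCard k univ)
    fun f hf => mem_powersetCard.mpr ⟨subset_univ _, (mem_filter.mp hf).2⟩]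
  simp only [filter_filter]
  rw [sum_congr rfl hfiber, sum_const, card_powersetCard, card_univ, Fintype.card_fin]

end Surjections

theorem Sop_symmFun {X : Type*} {n k : ℕ} (P : (Fin n → X) → ℝ) (z : Fin k → X) :
    Sop n k (symmFun n P) z = (∑ g ∈ surjs n k, P (z ∘ g)) / k.factorial := by
  have hperm : ∀ π : Equiv.Perm (Fin n),
      ∑ g ∈ surjs n k, P ((z ∘ g) ∘ π) = ∑ g ∈ surjs n k, P (z ∘ g) := fun π =>
    sum_nbij' (· ∘ π) (· ∘ π.symm)
      (fun g hg => by simpa [surjs] using (mem_filter.mp hg).2.comp π.surjective)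
      (fun g hg => by simpa [surjs] using (mem_filter.mp hg).2.comp π.symm.surjective)
      (fun g _ => by ext; simp) (fun g _ => by ext; simp) (fun g _ => rfl)
  simp only [Sop, symmFun, ← sum_div]
  rw [sum_comm]
  simp only [hperm, sum_const, card_univ, Fintype.card_perm, Fintype.card_fin,
    nsmul_eq_mul]
  rw [mul_div_cancel_left₀ _ (Nat.cast_ne_zero.mpr n.factorial_ne_zero)]

section Pairing

variable {X : Type*} [Fintype X]

theorem pairing_sum {n : ℕ} {ι : Type*} (μ : (Fin n → X) → ℝ) (s : Finset ι)
    (F : ι → (Fin n → X) → ℝ) :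
    pairing n μ (fun y => ∑ a ∈ s, F a y) = ∑ a ∈ s, pairing n μ (F a) := by
  simp only [pairing, mul_sum]
  exact sum_comm

theorem pairing_div_const {n : ℕ} (μ F : (Fin n → X) → ℝ) (c : ℝ) :
    pairing n μ (fun y => F y / c) = pairing n μ F / c := by
  simp only [pairing, mul_div_assoc', sum_div]

theorem pairing_prodMeas_comp_perm {m : ℕ} (W : X → ℝ) (F : (Fin m → X) → ℝ)
    (σ : Equiv.Perm (Fin m)) :
    pairing m (prodMeas W m) (fun y => F (y ∘ σ)) = pairing m (prodMeas W m) F := by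
  unfold pairing prodMeas
  refine Fintype.sum_equiv (σ.symm.arrowCongr (Equiv.refl X)) _ _ fun y => ?_
  simp only [Equiv.arrowCongr_apply, Equiv.symm_symm, Equiv.coe_refl, id_comp]
  rw [← Equiv.prod_comp σ fun i => W (y i)]
  rfl

theorem pairing_prodMeas_symmFun {m : ℕ} (W : X → ℝ) (F : (Fin m → X) → ℝ) :
    pairing m (prodMeas W m) (symmFun m F) = pairing m (prodMeas W m) F := by
  have hsum : pairing m (prodMeas W m) (symmFun m F)
      = (∑ σ : Equiv.Perm (Fin m), pairing m (prodMeas W m) (fun y => F (y ∘ σ))) /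
          m.factorial := by
    simp only [pairing, symmFun, mul_div_assoc', mul_sum, ← sum_div]
    rw [sum_comm]
  simp only [hsum, pairing_prodMeas_comp_perm, sum_const, card_univ,
    Fintype.card_perm, Fintype.card_fin, nsmul_eq_mul]
  exact mul_div_cancel_left₀ _ (Nat.cast_ne_zero.mpr m.factorial_ne_zero)

theorem pairing_prodMeas_comp_injective {k m : ℕ} (W : X → ℝ) (G : (Fin k → X) → ℝ)
    {ι ι' : Fin k → Fin m} (hι : Injective ι) (hι' : Injective ι') :
    pairing m (prodMeas W m) (fun y => G (y ∘ ι)) =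
      pairing m (prodMeas W m) (fun y => G (y ∘ ι')) := by
  obtain ⟨σ, hσ⟩ := Equiv.Perm.exists_extending_pair ι' ι hι' hι
  have hcomp : ∀ y : Fin m → X, y ∘ ι = (y ∘ σ) ∘ ι' := fun y => funext fun a => by
    simp [hσ]
  simp only [hcomp]
  exact pairing_prodMeas_comp_perm W (fun y => G (y ∘ ι')) σ

theorem pairing_prodMeas_mul_prod {m : ℕ} (ω φ : X → ℝ) (F : (Fin m → X) → ℝ) :
    pairing m (prodMeas ω m) (fun y => F y * ∏ i, φ (y i)) =
      pairing m (prodMeas (ω * φ) m) F := by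
  unfold pairing prodMeas
  refine sum_congr rfl fun y _ => ?_
  simp only [Pi.mul_apply, prod_mul_distrib]
  ring

theorem pairing_prodMeas_prod_sum {n m : ℕ} (ω φ : X → ℝ) (ξ : Fin n → X → ℝ) :
    pairing m (prodMeas ω m) (fun y => (∏ i, φ (y i)) * ∏ j, ∑ i, ξ j (y i)) =
      ∑ f : Fin n → Fin m, pairing m (prodMeas (ω * φ) m) (fun y => ∏ j, ξ j (y (f j))) := by
  simp only [mul_comm (∏ i, φ _), pairing_prodMeas_mul_prod, prod_univ_sum,
    Fintype.piFinset_univ, pairing_sum]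

theorem pairing_symmFun_Sop_mul_prod {n m k : ℕ} (hkm : k ≤ m) (ω φ : X → ℝ)
    (P : (Fin n → X) → ℝ) :
    pairing m (prodMeas ω m)
        (symmFun m fun y => Sop n k (symmFun n P) (fun a => y (Fin.castLE hkm a)) * ∏ i, φ (y i)) =
      (∑ g ∈ surjs n k, pairing m (prodMeas (ω * φ) m) fun y => P (y ∘ Fin.castLE hkm ∘ g)) /
        k.factorial := by
  simp only [pairing_prodMeas_symmFun, pairing_prodMeas_mul_prod, Sop_symmFun, pairing_div_const,
    pairing_sum]
  rfl

end Pairing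

theorem gruenert_formula_general
    {X : Type*} [Fintype X] {n : ℕ} (hn : 1 ≤ n) (m : ℕ)
    (ω φ : X → ℝ) (ξ : Fin n → X → ℝ) :
    pairing m (prodMeas ω m)
        (fun y => (∏ i, φ (y i)) * ∏ j : Fin n, (∑ i : Fin m, ξ j (y i)))
      = ∑ k ∈ Finset.Icc 1 n,
          (∏ t ∈ Finset.range k, ((m : ℝ) - (t : ℝ))) *
            pairing m (prodMeas ω m)
              (symmFun m (fun y =>
                (if h : k ≤ m then
                    Sop n k (symmFun n (fun v => ∏ j, ξ j (v j)))
                      (fun a => y (Fin.castLE h a))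
                  else 0) * ∏ i, φ (y i))) := by
  have : Nonempty (Fin n) := ⟨⟨0, hn⟩⟩
  let T : (Fin n → Fin m) → ℝ := fun f =>
    pairing m (prodMeas (ω * φ) m) (fun y => ∏ j, ξ j ((y ∘ f) j))
  have hT : ∀ {k} (ι ι' : Fin k → Fin m), Injective ι → Injective ι' →
      ∀ g : Fin n → Fin k, T (ι ∘ g) = T (ι' ∘ g) := fun _ _ hι hι' g =>
    pairing_prodMeas_comp_injective (ω * φ) (fun z => ∏ j, ξ j (z (g j))) hι hι'
  rw [pairing_prodMeas_prod_sum, sum_eq_sum_Icc_card_image, Fintype.card_fin]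
  refine sum_congr rfl fun k _ => ?_
  rw [prod_range_natCast_sub_eq_descFactorial]
  by_cases hkm : k ≤ m
  · simp only [dif_pos hkm]
    rw [pairing_symmFun_Sop_mul_prod, Nat.descFactorial_eq_factorial_mul_choose, Nat.cast_mul,
      mul_comm (k.factorial : ℝ), mul_assoc,
      mul_div_cancel₀ _ (Nat.cast_ne_zero.mpr k.factorial_ne_zero), ← nsmul_eq_mul]
    exact sum_card_image_eq_choose_smul T hT hkm
  · rw [Nat.descFactorial_eq_zero_iff_lt.mpr (not_le.mp hkm), Nat.cast_zero, zero_mul]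
    refine sum_eq_zero fun f hf => absurd ?_ hkm
    rw [← (mem_filter.mp hf).2]
    simpa using card_le_univ (univ.image f)

/-- Infinite-dimensional Grünert formula, finite setting:
the operator `⟨ω,ξ∂⟩` acts on a monomial `⟨ω^{⊗m}, f⟩` by multiplying the kernel by
`ξ(x₁)+⋯+ξ(x_m)`; hence the composition `⟨ω,ξ₁∂⟩⋯⟨ω,ξ_n∂⟩` applied to `⟨ω^{⊗m}, φ^{⊗m}⟩`
is the monomial with kernel `φ^{⊗m}·∏_j(Σ_i ξ_j(x_i))`, and this equals
`Σ_{k=1}^{n} (m)_k ⟨ω^{⊗m}, ((S(n,k)(ξ₁⊙⋯⊙ξ_n))·φ^{⊗k}) ⊙ φ^{⊗(m−k)}⟩`. -/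
theorem gruenert_formula
    {X : Type*} [Fintype X] [DecidableEq X] {n : ℕ} (hn : 1 ≤ n) (m : ℕ)
    (ω φ : X → ℝ) (ξ : Fin n → X → ℝ) :
    pairing m (prodMeas ω m)
        (fun y => (∏ i, φ (y i)) * ∏ j : Fin n, (∑ i : Fin m, ξ j (y i)))
      = ∑ k ∈ Finset.Icc 1 n,
          (∏ t ∈ Finset.range k, ((m : ℝ) - (t : ℝ))) *
            pairing m (prodMeas ω m)
              (symmFun m (fun y =>
                (if h : k ≤ m then
                    Sop n k (symmFun n (fun v => ∏ j, ξ j (v j)))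
                      (fun a => y (Fin.castLE h a))
                  else 0) * ∏ i, φ (y i))) :=
  gruenert_formula_general hn m ω φ ξ
end

section
/- (Poisson functional evaluates falling factorials to moments.) Let X be a finite set and ω a finitely supported signed measure on X with total mass ω(X). Define the Poisson functional on a polynomial p of the measure variable by E_ω(p) = e^{−ω(X)} Σ_{m=0}^{∞} (1/m!) Σ_{x₁,…,x_m ∈ X} p(δ_{x₁}+⋯+δ_{x_m}) ω({x₁})⋯ω({x_m}). Then for every k ≥ 1 and symmetric g : X^k → ℝ, E_ω applied to the polynomial η ↦ ⟨(η)_k, g⟩ equals ⟨ω^{⊗k}, g⟩. Consequently, for symmetric f : X^n → ℝ, E_ω applied to η ↦ ⟨η^{⊗n}, f⟩ equals Σ_{k=1}^{n} ⟨ω^{⊗k}, S(n,k)f⟩. -/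
open Finset

/-- The Poisson functional with (possibly signed) intensity `ω`:
`E_ω(p) = e^{−ω(X)} Σ_{m=0}^{∞} (1/m!) Σ_{x₁,…,x_m ∈ X} p(δ_{x₁}+⋯+δ_{x_m}) ω({x₁})⋯ω({x_m})`. -/
noncomputable def poissonE {X : Type*} [Fintype X] [DecidableEq X]
    (ω : X → ℝ) (p : (X → ℝ) → ℝ) : ℝ :=
  Real.exp (-∑ x, ω x) *
    ∑' m : ℕ, (1 / (m.factorial : ℝ)) * ∑ x : Fin m → X, p (msMeas x) * ∏ i, ω (x i)

/-! For `η = δ_{x₁}+⋯+δ_{x_m}`, the density `(η)_k(y)` counts the injections `α : Fin k ↪ Fin m`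
with `x ∘ α = y`, so `⟨(η)_k, g⟩ = Σ_α g (x ∘ α)`. Against the weight `ω(x₁)⋯ω(x_m)` each injection
contributes `⟨ω^{⊗k}, g⟩ ω(X)^{m-k}`, there are `m!/(m-k)!` of them, and the Poisson weights `1/m!`
sum the resulting series to `⟨ω^{⊗k}, g⟩ e^{ω(X)}`.

For the moments, every `β : Fin n → Fin m` factors as a surjection onto `Fin j`, `j = #(im β)`,
followed by an injection, in exactly `j!` ways; this writes `⟨η^{⊗n}, f⟩` as
`Σ_j ⟨(η)_j, S(n,j) f⟩` and reduces the second identity to the first. -/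

section Counting

variable {X : Type*} [DecidableEq X]

lemma card_notMem_range_eq_msMeas_sub {m k : ℕ} (x : Fin m → X) (α : Fin k ↪ Fin m) (b : X) :
    (#{a | x a = b ∧ a ∉ Set.range α} : ℝ)
      = msMeas x b - ∑ i, if x (α i) = b then (1 : ℝ) else 0 := by
  have hrange : ({i | x (α i) = b} : Finset (Fin k)).map α =
      ({a | x a = b ∧ a ∈ Set.range α} : Finset (Fin m)) := by
    ext a
    simp only [mem_map, mem_filter, mem_univ, true_and, Set.mem_range]
    grind
  have hsplit := card_filter_add_card_filter_not (s := ({a | x a = b} : Finset (Fin m)))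
    (· ∈ Set.range α)
  rw [filter_filter, filter_filter, ← hrange, card_map] at hsplit
  rw [msMeas, ← hsplit, sum_boole]
  push_cast
  ring

lemma card_embedding_comp_succ {m k : ℕ} (x : Fin m → X) (y : Fin (k + 1) → X) :
    #{α : Fin (k + 1) ↪ Fin m | x ∘ α = y}
      = ∑ α' ∈ ({α' | x ∘ ⇑α' = Fin.init y} : Finset (Fin k ↪ Fin m)),
          #{a | x a = y (Fin.last k) ∧ a ∉ Set.range ⇑α'} := by
  rw [card_eq_sum_card_fiberwise (f := Fin.Embedding.init) (t := {α' | x ∘ ⇑α' = Fin.init y})]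
  · refine sum_congr rfl fun α' hα' => ?_
    simp only [mem_filter, mem_univ, true_and] at hα'
    refine card_bij (fun α _ => α (Fin.last k)) ?_ ?_ ?_
    · rintro α hα
      simp only [mem_filter, mem_univ, true_and] at hα ⊢
      obtain ⟨rfl, rfl⟩ := hα
      refine ⟨rfl, ?_⟩
      rintro ⟨i, hi⟩
      exact (Fin.castSucc_lt_last i).ne (α.injective hi)
    · rintro α hα β hβ hlast
      simp only [mem_filter, mem_univ, true_and] at hα hβ
      refine DFunLike.ext _ _ fun i => Fin.lastCases hlast (fun i => ?_) i
      exact DFunLike.congr_fun (hα.2.trans hβ.2.symm) i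
    · rintro a ha
      simp only [mem_filter, mem_univ, true_and] at ha
      refine ⟨Fin.Embedding.snoc α' ha.2, ?_, Fin.Embedding.snoc_last⟩
      simp only [mem_filter, mem_univ, true_and, Fin.Embedding.init_snoc, and_true]
      funext i
      induction i using Fin.lastCases with
      | last => simp [ha.1]
      | cast i => simpa [Fin.init] using congrFun hα' i
  · intro α hα
    simp only [coe_filter, mem_univ, true_and, Set.mem_ofPred_eq] at hα ⊢
    rw [← hα]
    rfl

lemma ff_msMeas_apply {m : ℕ} (x : Fin m → X) :
    ∀ (k : ℕ) (y : Fin k → X), ff (msMeas x) k y = #{α : Fin k ↪ Fin m | x ∘ α = y}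
  | 0, y => by
    rw [ff, eq_comm, Nat.cast_eq_one, card_eq_one]
    exact ⟨default, by ext; simp [funext_iff]⟩
  | k + 1, y => by
    have hfiber : ∀ α' ∈ ({α' | x ∘ ⇑α' = Fin.init y} : Finset (Fin k ↪ Fin m)),
        (#{a | x a = y (Fin.last k) ∧ a ∉ Set.range ⇑α'} : ℝ)
          = msMeas x (y (Fin.last k))
            - ∑ i : Fin k, if y i.castSucc = y (Fin.last k) then (1 : ℝ) else 0 := by
      intro α' hα'
      simp only [mem_filter, mem_univ, true_and] at hα'
      rw [card_notMem_range_eq_msMeas_sub]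
      simp only [← Function.comp_apply (f := x), hα', Fin.init]
    rw [card_embedding_comp_succ, Nat.cast_sum, sum_congr rfl hfiber, sum_const, nsmul_eq_mul,
      ← ff_msMeas_apply x k]
    rfl

lemma prodMeas_msMeas_apply {m n : ℕ} (x : Fin m → X) (y : Fin n → X) :
    prodMeas (msMeas x) n y = #{β : Fin n → Fin m | x ∘ β = y} := by
  simp only [prodMeas, msMeas]
  rw [← Nat.cast_prod, ← Fintype.card_piFinset]
  congr 2
  ext β
  simp [Fintype.mem_piFinset, funext_iff]

end Counting

section Factorization

variable {n m j : ℕ}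

lemma exists_embedding_comp_surj (β : Fin n → Fin m) (hβ : #(univ.image β) = j) :
    ∃ α : Fin j ↪ Fin m, ∃ g ∈ surjs n j, ⇑α ∘ g = β := by
  set e := (univ.image β).orderIsoOfFin hβ
  refine ⟨e.toEquiv.toEmbedding.trans (Function.Embedding.subtype _),
    fun i => e.symm ⟨β i, mem_image_of_mem β (mem_univ i)⟩, ?_, ?_⟩
  · simp only [surjs, mem_filter, mem_univ, true_and]
    intro i
    obtain ⟨i', -, hi'⟩ := mem_image.mp (e i).2
    exact ⟨i', by simp [hi']⟩
  · funext i
    simp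

lemma card_embedding_comp_surj_eq_factorial (β : Fin n → Fin m) (hβ : #(univ.image β) = j) :
    #((univ ×ˢ surjs n j).filter fun p : (Fin j ↪ Fin m) × (Fin n → Fin j) => ⇑p.1 ∘ p.2 = β)
      = j.factorial := by
  obtain ⟨α₀, g₀, hg₀, rfl⟩ := exists_embedding_comp_surj β hβ
  simp only [surjs, mem_filter, mem_univ, true_and] at hg₀
  rw [show j.factorial = #(univ : Finset (Equiv.Perm (Fin j))) by
    rw [card_univ, Fintype.card_perm, Fintype.card_fin], eq_comm]
  refine card_bij (fun σ _ => (σ.toEmbedding.trans α₀, σ.symm ∘ g₀)) ?_ ?_ ?_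
  · intro σ _
    simp only [surjs, mem_filter, mem_product, mem_univ, true_and]
    refine ⟨σ.symm.surjective.comp hg₀, ?_⟩
    funext i
    simp
  · intro σ _ τ _ h
    ext i
    exact congrArg Fin.val (α₀.injective (DFunLike.congr_fun (Prod.ext_iff.mp h).1 i))
  · rintro ⟨α, g⟩ hp
    simp only [surjs, mem_filter, mem_product, mem_univ, true_and] at hp
    obtain ⟨hg, hcomp⟩ := hp
    -- the permutation relating the two factorizations sends `i` to `g₀` of a `g`-preimage of `i`
    have hσ : ∀ i, α₀ (g₀ (Function.surjInv hg i)) = α i := fun i => by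
      rw [← Function.comp_apply (f := α₀), ← hcomp, Function.comp_apply,
        Function.surjInv_eq hg]
    have hσinj : Function.Injective (g₀ ∘ Function.surjInv hg) := fun a b h =>
      α.injective ((hσ a).symm.trans ((congrArg α₀ h).trans (hσ b)))
    set σ := Equiv.ofBijective _ hσinj.bijective_of_finite
    refine ⟨σ, mem_univ _, Prod.ext (DFunLike.ext _ _ hσ) (funext fun i => ?_)⟩
    change σ.symm (g₀ i) = g i
    rw [Equiv.symm_apply_eq]
    exact α₀.injective ((congrFun hcomp i).symm.trans (hσ (g i)).symm)

lemma sum_embedding_comp_surj_eq_factorial_smul {M : Type*} [AddCommMonoid M]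
    (F : (Fin n → Fin m) → M) :
    ∑ α : Fin j ↪ Fin m, ∑ g ∈ surjs n j, F (α ∘ g)
      = j.factorial • ∑ β : Fin n → Fin m with #(univ.image β) = j, F β := by
  rw [← sum_product', smul_sum, ← sum_fiberwise_of_maps_to
    (g := fun p : (Fin j ↪ Fin m) × (Fin n → Fin j) => ⇑p.1 ∘ p.2)
    (t := {β : Fin n → Fin m | #(univ.image β) = j})]
  · refine sum_congr rfl fun β hβ => ?_
    simp only [mem_filter, mem_univ, true_and] at hβ
    rw [sum_congr rfl fun p hp => congrArg F (mem_filter.mp hp).2, sum_const,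
      card_embedding_comp_surj_eq_factorial β hβ]
  · rintro ⟨α, g⟩ hp
    simp only [surjs, mem_filter, mem_product, mem_univ, true_and] at hp ⊢
    rw [← image_image, image_univ_of_surjective hp, card_image_of_injective _ α.injective,
      card_univ, Fintype.card_fin]

lemma sum_eq_sum_Icc_embedding_comp_surj (hn : 1 ≤ n) (F : (Fin n → Fin m) → ℝ) :
    ∑ β, F β
      = ∑ j ∈ Icc 1 n, (∑ α : Fin j ↪ Fin m, ∑ g ∈ surjs n j, F (α ∘ g)) / j.factorial := by
  rw [← sum_fiberwise_of_maps_to (g := fun β : Fin n → Fin m => #(univ.image β)) (t := Icc 1 n)]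
  · refine sum_congr rfl fun j _ => ?_
    rw [sum_embedding_comp_surj_eq_factorial_smul, nsmul_eq_mul,
      mul_div_cancel_left₀ _ (by positivity)]
  · intro β _
    rw [mem_Icc, one_le_card]
    exact ⟨image_nonempty.mpr (univ_nonempty_iff.mpr ⟨⟨0, hn⟩⟩), card_image_le.trans (by simp)⟩

end Factorization

lemma sum_comp_injective_mul_prod {X ι κ : Type*} [Fintype X] [Fintype ι] [DecidableEq ι]
    [Fintype κ] [DecidableEq κ] {α : ι → κ} (hα : Function.Injective α) (ω : X → ℝ)
    (g : (ι → X) → ℝ) :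
    ∑ x : κ → X, (∏ j, ω (x j)) * g (x ∘ α)
      = (∑ y : ι → X, (∏ i, ω (y i)) * g y) * (∑ a, ω a) ^ (Fintype.card κ - Fintype.card ι) := by
  set e := Equiv.piEquivPiSubtypeProd (· ∈ Set.range α) (fun _ => X)
  rw [← e.symm.sum_comp, Fintype.sum_prod_type]
  have hprod (u v) : ∏ j, ω (e.symm (u, v) j) = (∏ j, ω (u j)) * ∏ j, ω (v j) := by
    rw [← Fintype.prod_subtype_mul_prod_subtype (· ∈ Set.range α)]
    congr 1
    all_goals exact Finset.prod_congr (by congr!) fun j _ => by simp [e, j.2]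
  have hcomp (u v) : e.symm (u, v) ∘ α = u ∘ Set.rangeFactorization α := by
    funext i
    simp [e, Set.rangeFactorization]
  have hcompl : ∑ v : {j // j ∉ Set.range α} → X, ∏ j, ω (v j)
      = (∑ a, ω a) ^ (Fintype.card κ - Fintype.card ι) := by
    rw [← Fintype.prod_sum, prod_const, card_univ, Fintype.card_subtype_compl,
      Set.card_range_of_injective hα]
  have hrange : ∑ u : Set.range α → X, (∏ j, ω (u j)) * g (u ∘ Set.rangeFactorization α)
      = ∑ y : ι → X, (∏ i, ω (y i)) * g y := by
    set r := (Equiv.ofInjective α hα).arrowCongr (Equiv.refl X)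
    rw [← r.sum_comp]
    refine Fintype.sum_congr _ _ fun y => ?_
    have hy : r y ∘ Set.rangeFactorization α = y := by
      funext i
      simp [r, Set.rangeFactorization, Equiv.arrowCongr]
    rw [hy, ← (Equiv.ofInjective α hα).symm.prod_comp]
    simp [r, Equiv.arrowCongr]
  simp only [hprod, hcomp, mul_right_comm _ _ (g _), ← mul_sum, hcompl, ← sum_mul, hrange]

lemma hasSum_descFactorial_div_factorial_mul_pow (s : ℝ) (k : ℕ) :
    HasSum (fun m => (m.descFactorial k : ℝ) / m.factorial * s ^ (m - k)) (Real.exp s) := by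
  rw [← hasSum_nat_add_iff' k]
  have hlow : ∑ i ∈ range k, (i.descFactorial k : ℝ) / i.factorial * s ^ (i - k) = 0 :=
    sum_eq_zero fun i hi => by
      rw [Nat.descFactorial_eq_zero_iff_lt.mpr (mem_range.mp hi)]
      simp
  have hshift (j : ℕ) : ((j + k).descFactorial k : ℝ) / (j + k).factorial * s ^ (j + k - k)
      = s ^ j / j.factorial := by
    have h := Nat.factorial_mul_descFactorial (Nat.le_add_left k j)
    rw [Nat.add_sub_cancel] at h ⊢
    rw [← h, Nat.cast_mul]
    field_simp
  simp only [hlow, hshift, sub_zero, Real.exp_eq_exp_ℝ]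
  exact NormedSpace.expSeries_div_hasSum_exp s

section Poisson

variable {X : Type*} [Fintype X] [DecidableEq X]

lemma pairing_card_fiber {k : ℕ} {A : Type*} (s : Finset A) (c : A → Fin k → X)
    (f : (Fin k → X) → ℝ) :
    pairing k (fun y => (#{a ∈ s | c a = y} : ℝ)) f = ∑ a ∈ s, f (c a) := by
  rw [pairing, ← sum_fiberwise_of_maps_to (g := c) (t := univ) fun _ _ => mem_univ _]
  refine sum_congr rfl fun y _ => ?_
  rw [sum_congr rfl fun a ha => congrArg f (mem_filter.mp ha).2, sum_const, nsmul_eq_mul]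

lemma pairing_ff_msMeas {m k : ℕ} (x : Fin m → X) (g : (Fin k → X) → ℝ) :
    pairing k (ff (msMeas x) k) g = ∑ α : Fin k ↪ Fin m, g (x ∘ α) := by
  rw [funext (ff_msMeas_apply x k), pairing_card_fiber]

lemma pairing_prodMeas_msMeas {m n : ℕ} (x : Fin m → X) (f : (Fin n → X) → ℝ) :
    pairing n (prodMeas (msMeas x) n) f = ∑ β : Fin n → Fin m, f (x ∘ β) := by
  rw [funext (prodMeas_msMeas_apply x), pairing_card_fiber]

lemma pairing_prodMeas_msMeas_eq_sum_ff {m n : ℕ} (hn : 1 ≤ n) (x : Fin m → X)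
    (f : (Fin n → X) → ℝ) :
    pairing n (prodMeas (msMeas x) n) f
      = ∑ j ∈ Icc 1 n, pairing j (ff (msMeas x) j) (Sop n j f) := by
  rw [pairing_prodMeas_msMeas, sum_eq_sum_Icc_embedding_comp_surj hn]
  refine sum_congr rfl fun j _ => ?_
  rw [pairing_ff_msMeas, sum_div]
  rfl

lemma sum_pairing_ff_msMeas_mul_prod (ω : X → ℝ) (k m : ℕ) (g : (Fin k → X) → ℝ) :
    ∑ x : Fin m → X, pairing k (ff (msMeas x) k) g * ∏ i, ω (x i)
      = m.descFactorial k * (pairing k (prodMeas ω k) g * (∑ a, ω a) ^ (m - k)) := by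
  simp_rw [pairing_ff_msMeas, sum_mul]
  rw [sum_comm]
  simp_rw [mul_comm (g _), sum_comp_injective_mul_prod (Function.Embedding.injective _),
    Fintype.card_fin]
  rw [sum_const, card_univ, Fintype.card_embedding_eq, Fintype.card_fin, Fintype.card_fin,
    nsmul_eq_mul]
  rfl

lemma hasSum_poissonSeries_pairing_ff (ω : X → ℝ) (k : ℕ) (g : (Fin k → X) → ℝ) :
    HasSum (fun m => 1 / (m.factorial : ℝ)
        * ∑ x : Fin m → X, pairing k (ff (msMeas x) k) g * ∏ i, ω (x i))
      (pairing k (prodMeas ω k) g * Real.exp (∑ a, ω a)) := by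
  refine ((hasSum_descFactorial_div_factorial_mul_pow (∑ a, ω a) k).mul_left
    (pairing k (prodMeas ω k) g)).congr_fun fun m => ?_
  rw [sum_pairing_ff_msMeas_mul_prod]
  ring

lemma poissonE_eq_of_hasSum (ω : X → ℝ) (p : (X → ℝ) → ℝ) (c : ℝ)
    (h : HasSum (fun m => 1 / (m.factorial : ℝ) * ∑ x : Fin m → X, p (msMeas x) * ∏ i, ω (x i))
      (c * Real.exp (∑ a, ω a))) :
    poissonE ω p = c := by
  rw [poissonE, h.tsum_eq, mul_left_comm, ← Real.exp_add, neg_add_cancel, Real.exp_zero, mul_one]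

lemma poissonE_pairing_ff (ω : X → ℝ) (k : ℕ) (g : (Fin k → X) → ℝ) :
    poissonE ω (fun η => pairing k (ff η k) g) = pairing k (prodMeas ω k) g :=
  poissonE_eq_of_hasSum ω _ _ (hasSum_poissonSeries_pairing_ff ω k g)

lemma poissonE_pairing_prodMeas (ω : X → ℝ) {n : ℕ} (hn : 1 ≤ n) (f : (Fin n → X) → ℝ) :
    poissonE ω (fun η => pairing n (prodMeas η n) f)
      = ∑ j ∈ Icc 1 n, pairing j (prodMeas ω j) (Sop n j f) := by
  refine poissonE_eq_of_hasSum ω _ _ ?_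
  rw [sum_mul]
  convert hasSum_sum fun j _ => hasSum_poissonSeries_pairing_ff ω j (Sop n j f) using 2 with m
  simp_rw [pairing_prodMeas_msMeas_eq_sum_ff hn, sum_mul, mul_sum]
  exact sum_comm

end Poisson

theorem poisson_functional_falling_factorials_general
    {X : Type*} [Fintype X] [DecidableEq X] (ω : X → ℝ)
    {k : ℕ} (g : (Fin k → X) → ℝ)
    {n : ℕ} (hn : 1 ≤ n) (f : (Fin n → X) → ℝ) :
    poissonE ω (fun η => pairing k (ff η k) g) = pairing k (prodMeas ω k) g
    ∧ poissonE ω (fun η => pairing n (prodMeas η n) f)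
        = ∑ j ∈ Finset.Icc 1 n, pairing j (prodMeas ω j) (Sop n j f) :=
  ⟨poissonE_pairing_ff ω k g, poissonE_pairing_prodMeas ω hn f⟩

/-- the Poisson functional maps falling factorials to moments:
`E_ω(⟨(·)_k, g⟩) = ⟨ω^{⊗k}, g⟩` for every symmetric `g : X^k → ℝ`; consequently
`E_ω(⟨(·)^{⊗n}, f⟩) = Σ_{k=1}^{n} ⟨ω^{⊗k}, S(n,k)f⟩` for symmetric `f : X^n → ℝ`. -/
theorem poisson_functional_falling_factorials
    {X : Type*} [Fintype X] [DecidableEq X] (ω : X → ℝ)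
    {k : ℕ} (hk : 1 ≤ k) (g : (Fin k → X) → ℝ) (hg : IsSymmFun g)
    {n : ℕ} (hn : 1 ≤ n) (f : (Fin n → X) → ℝ) (hf : IsSymmFun f) :
    poissonE ω (fun η => pairing k (ff η k) g) = pairing k (prodMeas ω k) g
    ∧ poissonE ω (fun η => pairing n (prodMeas η n) f)
        = ∑ j ∈ Finset.Icc 1 n, pairing j (prodMeas ω j) (Sop n j f) :=
  poisson_functional_falling_factorials_general ω g hn f
end

section
/- (Laplace transform of the Poisson functional.) Let X be a finite set, ω a finitely supported signed measure on X, and ξ : X → ℝ. Then Σ_{n=0}^{∞} (1/n!) E_ω(m_ξ^{(n)}) = exp(⟨ω, e^{ξ} − 1⟩), where m_ξ^{(n)}(η) = ⟨η, ξ⟩^n and E_ω(p) = e^{−ω(X)} Σ_{m=0}^{∞} (1/m!) Σ_{x₁,…,x_m} p(δ_{x₁}+⋯+δ_{x_m}) ω({x₁})⋯ω({x_m}); here ⟨ω, e^{ξ}−1⟩ = Σ_x ω({x})(e^{ξ(x)}−1), and both series converge absolutely. -/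
/-!
Expanding `E_ω`, the left-hand side becomes the double series
`Σₘ Σₙ (Σ_{x : Fin m → X} (Σᵢ ξ(xᵢ))ⁿ ∏ᵢ ω(xᵢ)) / (m! n!)` (`laplaceTerm`) times `e^{-ω(X)}`.
It converges absolutely: it is dominated termwise by the same series for `|ω|` and `|ξ|`, whose
terms are nonnegative and whose row sums are again exponential series. Summing over `n` first
turns `(Σᵢ ξ(xᵢ))ⁿ / n!` into `∏ᵢ e^{ξ(xᵢ)}`, so the `m`-th row sums to
`(Σₐ e^{ξ(a)} ω(a))ᵐ / m!`, and summing over `m` gives `exp (Σₐ e^{ξ(a)} ω(a))`.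
-/

open Finset

open scoped Nat

theorem Real.hasSum_pow_div_factorial (x : ℝ) : HasSum (fun n => x ^ n / n !) (Real.exp x) :=
  Real.exp_eq_exp_ℝ ▸ NormedSpace.expSeries_div_hasSum_exp x

namespace PoissonLaplace

variable {X : Type*} [Fintype X]

theorem sum_msMeas_mul [DecidableEq X] {m : ℕ} (x : Fin m → X) (ξ : X → ℝ) :
    ∑ a, msMeas x a * ξ a = ∑ i, ξ (x i) := by
  rw [← Finset.sum_fiberwise' Finset.univ x ξ]
  refine Finset.sum_congr rfl fun a _ => ?_
  rw [msMeas, Finset.sum_const, nsmul_eq_mul]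

noncomputable def laplaceTerm (ω ξ : X → ℝ) (m n : ℕ) : ℝ :=
  (∑ x : Fin m → X, (∑ i, ξ (x i)) ^ n * ∏ i, ω (x i)) / (m ! * n !)

theorem hasSum_laplaceTerm (ω ξ : X → ℝ) (m : ℕ) :
    HasSum (laplaceTerm ω ξ m) ((∑ a, Real.exp (ξ a) * ω a) ^ m / m !) := by
  have hx : ∀ x : Fin m → X, HasSum
      (fun n => (∑ i, ξ (x i)) ^ n / n ! * ((∏ i, ω (x i)) / m !))
      ((∏ i, Real.exp (ξ (x i)) * ω (x i)) / m !) := by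
    intro x
    rw [Finset.prod_mul_distrib, ← Real.exp_sum, mul_div_assoc]
    exact (Real.hasSum_pow_div_factorial _).mul_right _
  convert hasSum_sum fun x _ => hx x using 1
  · ext n
    rw [laplaceTerm, Finset.sum_div]
    refine Finset.sum_congr rfl fun x _ => ?_
    ring
  · rw [← Finset.sum_div, Finset.sum_pow', Fintype.piFinset_univ]

theorem abs_laplaceTerm_le (ω ξ : X → ℝ) (m n : ℕ) :
    |laplaceTerm ω ξ m n| ≤ laplaceTerm (|ω ·|) (|ξ ·|) m n := by
  unfold laplaceTerm
  rw [abs_div, abs_of_pos (by positivity : (0 : ℝ) < m ! * n !)]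
  gcongr
  refine (Finset.abs_sum_le_sum_abs _ _).trans (Finset.sum_le_sum fun x _ => ?_)
  rw [abs_mul, abs_pow, Finset.abs_prod]
  gcongr
  exact Finset.abs_sum_le_sum_abs _ _

theorem summable_laplaceTerm (ω ξ : X → ℝ) : Summable (Function.uncurry (laplaceTerm ω ξ)) := by
  have hnonneg : 0 ≤ Function.uncurry (laplaceTerm (|ω ·|) (|ξ ·|)) := fun p => by
    change 0 ≤ laplaceTerm _ _ p.1 p.2
    unfold laplaceTerm
    positivity
  have habs : Summable (Function.uncurry (laplaceTerm (|ω ·|) (|ξ ·|))) := by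
    refine (summable_prod_of_nonneg hnonneg).2
      ⟨fun m => (hasSum_laplaceTerm _ _ m).summable, ?_⟩
    simp only [Function.uncurry_apply_pair, fun m => (hasSum_laplaceTerm (|ω ·|) (|ξ ·|) m).tsum_eq]
    exact Real.summable_pow_div_factorial _
  exact habs.of_norm_bounded fun p => abs_laplaceTerm_le ω ξ p.1 p.2

theorem factorial_mul_laplaceTerm [DecidableEq X] (ω ξ : X → ℝ) (m n : ℕ) :
    n ! * laplaceTerm ω ξ m n =
      1 / m ! * ∑ x : Fin m → X, (∑ a, msMeas x a * ξ a) ^ n * ∏ i, ω (x i) := by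
  simp only [laplaceTerm, sum_msMeas_mul]
  field_simp

theorem div_factorial_mul_poissonE [DecidableEq X] (ω ξ : X → ℝ) (n : ℕ) :
    1 / n ! * poissonE ω (fun η => (∑ a, η a * ξ a) ^ n) =
      Real.exp (-∑ a, ω a) * ∑' m, laplaceTerm ω ξ m n := by
  simp only [poissonE, ← factorial_mul_laplaceTerm, tsum_mul_left]
  field_simp

end PoissonLaplace

open PoissonLaplace in
/-- Laplace transform of the Poisson functional:
`Σ_{n=0}^{∞} (1/n!) E_ω(m_ξ^{(n)}) = exp(⟨ω, e^{ξ} − 1⟩)` where `m_ξ^{(n)}(η) = ⟨η,ξ⟩^n`,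
and both series (the one defining each `E_ω(m_ξ^{(n)})` and the outer one) converge
absolutely. -/
theorem poisson_laplace_transform
    {X : Type*} [Fintype X] [DecidableEq X] (ω ξ : X → ℝ) :
    (∀ n : ℕ, Summable (fun m : ℕ =>
        (1 / (m.factorial : ℝ)) *
          ∑ x : Fin m → X, (∑ a, msMeas x a * ξ a) ^ n * ∏ i, ω (x i)))
    ∧ Summable (fun n : ℕ =>
        (1 / (n.factorial : ℝ)) * poissonE ω (fun η => (∑ a, η a * ξ a) ^ n))
    ∧ (∑' n : ℕ, (1 / (n.factorial : ℝ)) * poissonE ω (fun η => (∑ a, η a * ξ a) ^ n))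
        = Real.exp (∑ x, ω x * (Real.exp (ξ x) - 1)) := by
  have hsum := summable_laplaceTerm ω ξ
  refine ⟨fun n => ?_, ?_, ?_⟩
  · exact ((hsum.prod_symm.prod_factor n).mul_left (n ! : ℝ)).congr
      (factorial_mul_laplaceTerm ω ξ · n)
  · simp only [div_factorial_mul_poissonE]
    exact hsum.prod_symm.prod.mul_left _
  · calc ∑' n : ℕ, 1 / (n ! : ℝ) * poissonE ω (fun η => (∑ a, η a * ξ a) ^ n)
        = Real.exp (-∑ a, ω a) * ∑' m, ∑' n, laplaceTerm ω ξ m n := by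
          simp only [div_factorial_mul_poissonE, tsum_mul_left, hsum.tsum_comm]
      _ = Real.exp (-∑ a, ω a) * Real.exp (∑ a, Real.exp (ξ a) * ω a) := by
          simp only [(hasSum_laplaceTerm ω ξ _).tsum_eq, (Real.hasSum_pow_div_factorial _).tsum_eq]
      _ = Real.exp (∑ x, ω x * (Real.exp (ξ x) - 1)) := by
          rw [← Real.exp_add, neg_add_eq_sub, ← Finset.sum_sub_distrib]
          simp only [mul_sub, mul_one, mul_comm]
end

section
/- (Recurrence for Touchard measures.) For a finite set X, a finitely supported signed measure ω on X, and n ≥ 0, define the Touchard measure T_n(ω) on X^n by T_n(ω) = Σ_{k=1}^{n} Σ_{λ={λ₁,…,λ_k}∈UP(n,k)} Sym(ω^{[|λ₁|]} ⊗ ⋯ ⊗ ω^{[|λ_k|]}), where ω^{[i]} is the diagonal measure on X^i given by ω^{[i]}(dy₁⋯dy_i) = ω(dy₁)δ_{y₁}(dy₂)⋯δ_{y₁}(dy_i), and T_0(ω) := 1. Then T_{n+1}(ω) = Σ_{k=0}^{n} C(n,k) · Sym(T_k(ω) ⊗ ω^{[n+1−k]}). -/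
open Finset

/-- The diagonal measure `ω^{[i]}` on `X^i`:
`ω^{[i]}(dy₁⋯dy_i) = ω(dy₁)δ_{y₁}(dy₂)⋯δ_{y₁}(dy_i)` (with `ω^{[0]} := 1`). -/
noncomputable def diagMeas {X : Type*} [DecidableEq X] (ω : X → ℝ) (i : ℕ) :
    (Fin i → X) → ℝ :=
  fun y => if h : 0 < i then
      ω (y ⟨0, h⟩) * ∏ t, (if y t = y ⟨0, h⟩ then (1 : ℝ) else 0)
    else 1

/-- The Touchard measure `T_n(ω) = Σ_{k=1}^{n} Σ_{λ={λ₁,…,λ_k}∈UP(n,k)}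
Sym(ω^{[|λ₁|]} ⊗ ⋯ ⊗ ω^{[|λ_k|]})` on `X^n` (with `T_0(ω) := 1`): summing over
unordered partitions into `k` blocks is realized by summing over surjections
`g : Fin n → Fin k` (labelled blocks) and dividing by `k!`; the measure attached to `g`
is the pushforward of `ω^{⊗k}` under the diagonal embedding determined by `g`, i.e. the
product of the diagonal measures over the blocks of `g`. -/
noncomputable def touchardMeas {X : Type*} [Fintype X] [DecidableEq X]
    (ω : X → ℝ) (n : ℕ) : (Fin n → X) → ℝ :=
  fun y => if n = 0 then 1 else
    ∑ k ∈ Finset.Icc 1 n,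
      (∑ g ∈ surjs n k, ∑ v : Fin k → X,
          (∏ i, ω (v i)) * ∏ j, (if y j = v (g j) then (1 : ℝ) else 0)) / k.factorial

/-!
Write `T_n(ω) = Σ_l (1/l!) Σ_{g : [n] ↠ [l]} ω_g`, where `ω_g = blockMeas ω g` is the pushforward
of `ω^{⊗l}` under `v ↦ v ∘ g`, i.e. the product of the diagonal measures over the blocks of `g`.
In `Sym(T_k ⊗ ω^{[n+1-k]})` the tensor factor `ω^{[n+1-k]}` adds one last block on the last
`n + 1 - k` coordinates, and symmetrizing moves it around: a surjection `G : [n+1] ↠ [l+1]` arises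
from exactly `k! (n+1-k)!` pairs (permutation, surjection `[k] ↠ [l]`) if its last block has
`n + 1 - k` elements, and from none otherwise. With the factor `C(n,k)` the `k`-th term therefore
weighs `ω_G` by `|G⁻¹(last)| / ((n+1) l!)`, and summing over `k` removes the size condition.
Finally `Σ_G |G⁻¹(i)| ω_G` does not depend on the block `i` (relabel the blocks), so summing over
`i` gives `(l+1) Σ_G |G⁻¹(last)| ω_G = (n+1) Σ_G ω_G`, which turns the sum into `T_{n+1}(ω)`.
-/

section BlockAppend

variable {k l m : ℕ}

def blockAppend {l' : ℕ} (g : Fin k → Fin l) (g' : Fin m → Fin l') : Fin (k + m) → Fin (l + l') :=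
  Fin.append (Fin.castAdd l' ∘ g) (Fin.natAdd l ∘ g')

theorem blockAppend_castAdd {l' : ℕ} (g : Fin k → Fin l) (g' : Fin m → Fin l') (a : Fin k) :
    blockAppend g g' (Fin.castAdd m a) = Fin.castAdd l' (g a) :=
  Fin.append_left _ _ a

theorem blockAppend_natAdd {l' : ℕ} (g : Fin k → Fin l) (g' : Fin m → Fin l') (b : Fin m) :
    blockAppend g g' (Fin.natAdd k b) = Fin.natAdd l (g' b) :=
  Fin.append_right _ _ b

theorem blockAppend_eq_last_iff (h : Fin k → Fin l) (i : Fin (k + m)) :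
    blockAppend h (fun _ : Fin m => (0 : Fin 1)) i = Fin.last l ↔ k ≤ (i : ℕ) := by
  refine Fin.addCases (fun a => ?_) (fun b => ?_) i
  · simp [blockAppend_castAdd, Fin.ext_iff, (h a).isLt.ne, a.isLt]
  · simp [blockAppend_natAdd, Fin.ext_iff]

theorem blockAppend_surjective (hm : 0 < m) {h : Fin k → Fin l} (hh : Function.Surjective h) :
    Function.Surjective (blockAppend h fun _ : Fin m => (0 : Fin 1)) := by
  intro c
  induction c using Fin.lastCases with
  | last => exact ⟨Fin.natAdd k ⟨0, hm⟩, by rw [blockAppend_natAdd]; rfl⟩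
  | cast b =>
    obtain ⟨a, rfl⟩ := hh b
    exact ⟨Fin.castAdd m a, blockAppend_castAdd _ _ a⟩

end BlockAppend

section BlockMeas

variable {X : Type*} [Fintype X] [DecidableEq X] (ω : X → ℝ)

noncomputable def blockMeas {N K : ℕ} (g : Fin N → Fin K) (y : Fin N → X) : ℝ :=
  ∑ v : Fin K → X, (∏ i, ω (v i)) * ∏ j, if y j = v (g j) then (1 : ℝ) else 0

theorem blockMeas_perm_comp {N K : ℕ} (σ : Equiv.Perm (Fin K)) (g : Fin N → Fin K)
    (y : Fin N → X) : blockMeas ω (σ ∘ g) y = blockMeas ω g y := by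
  refine Fintype.sum_equiv (σ.arrowCongr (Equiv.refl X)).symm _ _ fun v => ?_
  congr 1
  exact (Equiv.prod_comp σ fun i => ω (v i)).symm

theorem blockMeas_comp_equiv {M N K : ℕ} (e : Fin M ≃ Fin N) (g : Fin M → Fin K)
    (y : Fin N → X) : blockMeas ω g (y ∘ e) = blockMeas ω (g ∘ e.symm) y := by
  refine sum_congr rfl fun v _ => ?_
  congr 1
  exact Fintype.prod_equiv e _ _ fun j => by simp

theorem blockMeas_blockAppend {k l m l' : ℕ} (g : Fin k → Fin l) (g' : Fin m → Fin l')
    (z : Fin (k + m) → X) :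
    blockMeas ω (blockAppend g g') z =
      blockMeas ω g (fun a => z (Fin.castAdd m a)) *
        blockMeas ω g' (fun b => z (Fin.natAdd k b)) := by
  rw [blockMeas, blockMeas, blockMeas, sum_mul_sum, ← Fintype.sum_prod_type',
    ← (Fin.appendEquiv l l').sum_comp]
  refine Fintype.sum_congr _ _ fun ⟨w, w'⟩ => ?_
  simp [Fin.appendEquiv, blockAppend, Fin.prod_univ_add]
  ring

theorem diagMeas_eq_blockMeas {m : ℕ} (hm : 0 < m) (u : Fin m → X) :
    diagMeas ω m u = blockMeas ω (fun _ : Fin m => (0 : Fin 1)) u := by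
  rw [diagMeas, dif_pos hm, blockMeas, ← (Equiv.funUnique (Fin 1) X).symm.sum_comp,
    sum_eq_single (u ⟨0, hm⟩)]
  · simp
  · intro x _ hx
    refine mul_eq_zero_of_right _ (prod_eq_zero (mem_univ ⟨0, hm⟩) ?_)
    simp [Ne.symm hx]
  · simp

end BlockMeas

section FiberCard

variable {N K : ℕ}

theorem mem_Icc_of_mem_surjs (hN : 0 < N) {g : Fin N → Fin K} (hg : g ∈ surjs N K) :
    K ∈ Icc 1 N := by
  have hK : K ≤ N := by simpa using Fintype.card_le_of_surjective g (mem_filter.mp hg).2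
  exact mem_Icc.mpr ⟨(g ⟨0, hN⟩).pos, hK⟩

theorem fiberCard_mem_Icc {G : Fin N → Fin K} (hG : G ∈ surjs N K) (i : Fin K) :
    fiberCard G i ∈ Icc 1 N := by
  obtain ⟨j, hj⟩ := (mem_filter.mp hG).2 i
  exact mem_Icc.mpr ⟨card_pos.mpr ⟨j, by simp [hj]⟩, (card_filter_le _ _).trans (by simp)⟩

theorem sum_fiberCard_s19 (G : Fin N → Fin K) : ∑ i, fiberCard G i = N := by
  simpa [fiberCard] using (card_eq_sum_card_fiberwise (s := univ) fun x _ => mem_univ (G x)).symm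

theorem fiberCard_perm_comp (σ : Equiv.Perm (Fin K)) (G : Fin N → Fin K) (i : Fin K) :
    fiberCard (σ ∘ G) (σ i) = fiberCard G i := by
  simp [fiberCard]

theorem sum_range_sum_filter_fiberCard_eq_sub {M : Type*} [AddCommMonoid M] (i : Fin K)
    (f : (Fin N → Fin K) → M) :
    ∑ k ∈ range N, ∑ G ∈ (surjs N K).filter (fun G => fiberCard G i = N - k), f G =
      ∑ G ∈ surjs N K, f G := by
  rw [← sum_fiberwise_of_maps_to fun G hG => fiberCard_mem_Icc hG i]
  refine sum_nbij' (N - ·) (N - ·) (fun k hk => ?_) (fun j hj => ?_) (fun k hk => ?_)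
    (fun j hj => ?_) fun _ _ => rfl
  · simp only [mem_Icc, mem_range] at hk ⊢; omega
  · simp only [mem_Icc, mem_range] at hj ⊢; omega
  · simp only [mem_range] at hk; omega
  · simp only [mem_Icc] at hj; omega

theorem card_mul_sum_fiberCard_mul (F : (Fin N → Fin K) → ℝ)
    (hF : ∀ (σ : Equiv.Perm (Fin K)) G, F (σ ∘ G) = F G) (i : Fin K) :
    (K : ℝ) * ∑ G ∈ surjs N K, fiberCard G i * F G = N * ∑ G ∈ surjs N K, F G := by
  have hmem {G} (hG : G ∈ surjs N K) (σ : Equiv.Perm (Fin K)) : σ ∘ G ∈ surjs N K :=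
    mem_filter.mpr ⟨mem_univ _, σ.surjective.comp (mem_filter.mp hG).2⟩
  have hj (j : Fin K) :
      ∑ G ∈ surjs N K, fiberCard G j * F G = ∑ G ∈ surjs N K, fiberCard G i * F G := by
    refine sum_nbij' (Equiv.swap j i ∘ ·) (Equiv.swap j i ∘ ·) (fun G hG => hmem hG _)
      (fun G hG => hmem hG _) (fun G _ => ?_) (fun G _ => ?_) fun G _ => ?_
    · funext; simp
    · funext; simp
    · rw [hF, ← fiberCard_perm_comp (Equiv.swap j i) G j, Equiv.swap_apply_left]
  calc
    _ = ∑ j, ∑ G ∈ surjs N K, fiberCard G j * F G := by simp [hj]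
    _ = _ := by simp_rw [sum_comm (s := univ), ← sum_mul, ← Nat.cast_sum, sum_fiberCard_s19, mul_sum]

end FiberCard

section EquivCount

open Fintype

variable {α β γ : Type*}

def equivCompEqEquivPiFiberEquiv (f : α → γ) (g : β → γ) :
    {e : α ≃ β // g ∘ e = f} ≃ ∀ c, {a // f a = c} ≃ {b // g b = c} where
  toFun e c := e.1.subtypeEquiv fun a => by rw [← congrFun e.2 a]; rfl
  invFun φ := ⟨Equiv.ofFiberEquiv φ, funext (Equiv.ofFiberEquiv_map φ)⟩
  left_inv e := Subtype.ext (Equiv.ext fun a => rfl)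
  right_inv φ := by funext c; ext ⟨a, rfl⟩; rfl

theorem card_equiv_comp_eq [Fintype α] [DecidableEq α] [Fintype β] [DecidableEq β] [Fintype γ]
    [DecidableEq γ] (f : α → γ) (g : β → γ) :
    card {e : α ≃ β // g ∘ e = f} =
      ∏ c, if card {a // f a = c} = card {b // g b = c} then (card {a // f a = c}).factorial
        else 0 := by
  rw [card_congr (equivCompEqEquivPiFiberEquiv f g), Fintype.card_pi]
  refine prod_congr rfl fun c _ => ?_
  split_ifs with h
  · exact card_equiv (equivOfCardEq h)
  · exact card_eq_zero_iff.mpr ⟨fun e => h (card_congr e)⟩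

theorem card_equiv_eq_last_iff_le {k m N l : ℕ} (hN : k + m = N) (G : Fin N → Fin (l + 1)) :
    card {e : Fin (k + m) ≃ Fin N // ∀ i, G (e i) = Fin.last l ↔ k ≤ (i : ℕ)} =
      if fiberCard G (Fin.last l) = m then k.factorial * m.factorial else 0 := by
  have hcomp (e : Fin (k + m) ≃ Fin N) : (∀ i, G (e i) = Fin.last l ↔ k ≤ (i : ℕ)) ↔
      (fun j => decide (G j = Fin.last l)) ∘ e = fun i : Fin (k + m) => decide (k ≤ (i : ℕ)) := by
    simp [funext_iff]
  rw [card_congr (Equiv.subtypeEquivRight hcomp), card_equiv_comp_eq, prod_bool]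
  have hk : #{i : Fin (k + m) | (i : ℕ) < k} = k := by simp [Fin.card_filter_val_lt]
  have hkm := card_filter_add_card_filter_not (s := univ) fun i : Fin (k + m) => (i : ℕ) < k
  have hG := card_filter_add_card_filter_not (s := univ) fun j => G j = Fin.last l
  simp only [not_lt, card_univ, Fintype.card_fin] at hkm hG
  simp only [Fintype.card_subtype, decide_eq_true_eq, decide_eq_false_iff_not, not_le]
  rw [hk, show #{i : Fin (k + m) | k ≤ (i : ℕ)} = m by omega]
  change _ = if #{j | G j = Fin.last l} = m then _ else _
  split_ifs <;> first | omega | ring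

end EquivCount

section Symmetrization

variable {k l m N : ℕ}

theorem sum_surjs_blockAppend_comp_symm {M : Type*} [AddCommMonoid M] (hm : 0 < m)
    (e : Fin (k + m) ≃ Fin N) (f : (Fin N → Fin (l + 1)) → M) :
    ∑ h ∈ surjs k l, f (blockAppend h (fun _ : Fin m => (0 : Fin 1)) ∘ e.symm) =
      ∑ G ∈ (surjs N (l + 1)).filter
        (fun G => ∀ i : Fin (k + m), G (e i) = Fin.last l ↔ k ≤ (i : ℕ)), f G := by
  have hlast {G} (hG : G ∈ (surjs N (l + 1)).filter
      (fun G => ∀ i : Fin (k + m), G (e i) = Fin.last l ↔ k ≤ (i : ℕ))) (a : Fin k) :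
      G (e (Fin.castAdd m a)) ≠ Fin.last l := by
    rw [Ne, (mem_filter.mp hG).2]
    simp [a.isLt]
  refine sum_bij' (fun h _ => blockAppend h (fun _ => 0) ∘ e.symm)
    (fun G hG a => (G (e (Fin.castAdd m a))).castPred (hlast hG a)) (fun h hh => ?_)
    (fun G hG => ?_) (fun h _ => ?_) (fun G hG => ?_) (fun _ _ => rfl)
  · refine mem_filter.mpr ⟨mem_filter.mpr ⟨mem_univ _, ?_⟩, fun i => ?_⟩
    · exact (blockAppend_surjective hm (mem_filter.mp hh).2).comp e.symm.surjective
    · simpa using blockAppend_eq_last_iff _ i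
  · refine mem_filter.mpr ⟨mem_univ _, fun b => ?_⟩
    obtain ⟨j, hj⟩ := (mem_filter.mp (mem_filter.mp hG).1).2 b.castSucc
    have hk : ((e.symm j : Fin (k + m)) : ℕ) < k := by
      have := (mem_filter.mp hG).2 (e.symm j)
      simp only [Equiv.apply_symm_apply, hj, Fin.castSucc_ne_last, false_iff] at this
      omega
    refine ⟨⟨e.symm j, hk⟩, ?_⟩
    simp [show Fin.castAdd m ⟨e.symm j, hk⟩ = e.symm j from Fin.ext rfl, hj]
  · ext a
    simp [blockAppend_castAdd]
  · funext j
    obtain ⟨i, rfl⟩ := e.surjective j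
    simp only [Function.comp_apply, Equiv.symm_apply_apply]
    refine Fin.addCases (fun a => ?_) (fun b => ?_) i
    · rw [blockAppend_castAdd]
      exact Fin.castSucc_castPred _ _
    · rw [blockAppend_natAdd]
      exact ((mem_filter.mp hG).2 _ |>.mpr (by simp)).symm

theorem sum_equiv_sum_surjs_blockAppend (hm : 0 < m) (hN : k + m = N)
    (f : (Fin N → Fin (l + 1)) → ℝ) :
    ∑ e : Fin (k + m) ≃ Fin N, ∑ h ∈ surjs k l,
        f (blockAppend h (fun _ : Fin m => (0 : Fin 1)) ∘ e.symm) =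
      (k.factorial * m.factorial : ℝ) *
        ∑ G ∈ (surjs N (l + 1)).filter (fun G => fiberCard G (Fin.last l) = m), f G := by
  calc
    _ = ∑ e : Fin (k + m) ≃ Fin N, ∑ G ∈ surjs N (l + 1),
          if ∀ i : Fin (k + m), G (e i) = Fin.last l ↔ k ≤ (i : ℕ) then f G else 0 := by
      simp_rw [sum_surjs_blockAppend_comp_symm hm, sum_filter]
    _ = ∑ G ∈ surjs N (l + 1), (Fintype.card
          {e : Fin (k + m) ≃ Fin N // ∀ i, G (e i) = Fin.last l ↔ k ≤ (i : ℕ)} : ℝ) * f G := by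
      rw [sum_comm]
      refine sum_congr rfl fun G _ => ?_
      rw [← sum_filter, sum_const, Fintype.card_subtype, nsmul_eq_mul]
    _ = _ := by
      simp_rw [card_equiv_eq_last_iff_le hN, mul_sum, sum_filter]
      refine sum_congr rfl fun G _ => ?_
      split_ifs <;> simp

theorem symmFun_castFun {X : Type*} {M : ℕ} (h : M = N) (F : (Fin M → X) → ℝ)
    (y : Fin N → X) :
    symmFun N (castFun h F) y = (∑ e : Fin M ≃ Fin N, F (y ∘ e)) / N.factorial := by
  rw [symmFun]
  congr 1
  exact Fintype.sum_equiv ((finCongr h).symm.equivCongr (Equiv.refl _)) _ _ fun π => rfl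

end Symmetrization

theorem choose_mul_factorial_mul_factorial_succ_sub {n k : ℕ} (hk : k ≤ n) :
    n.choose k * k.factorial * (n + 1 - k).factorial = n.factorial * (n + 1 - k) := by
  rw [Nat.succ_sub hk, Nat.factorial_succ, ← Nat.choose_mul_factorial_mul_factorial hk,
    Nat.succ_eq_add_one]
  ring

section Touchard

variable {X : Type*} [Fintype X] [DecidableEq X] (ω : X → ℝ)

theorem touchardMeas_eq_sum_blockMeas {K N : ℕ} (hK : K < N) (u : Fin K → X) :
    touchardMeas ω K u = ∑ l ∈ range N, (∑ g ∈ surjs K l, blockMeas ω g u) / l.factorial := by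
  rw [touchardMeas]
  split_ifs with h0
  · subst h0
    rw [sum_eq_single_of_mem 0 (mem_range.mpr hK)]
    · simp [surjs, blockMeas, Function.Surjective]
    · intro l _ hl
      have : surjs 0 l = ∅ := by
        refine eq_empty_of_forall_notMem fun g hg => ?_
        exact ((mem_filter.mp hg).2 ⟨0, by omega⟩).choose.elim0
      simp [this]
  · refine sum_subset (fun l hl => mem_range.mpr (by grind)) fun l _ hl => ?_
    rw [sum_eq_zero fun g hg => absurd (mem_Icc_of_mem_surjs (by omega) hg) hl, zero_div]

theorem touchardMeas_succ_eq_sum_blockMeas (n : ℕ) (y : Fin (n + 1) → X) :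
    touchardMeas ω (n + 1) y =
      ∑ l ∈ range (n + 1), (∑ G ∈ surjs (n + 1) (l + 1), blockMeas ω G y) / (l + 1).factorial := by
  rw [touchardMeas_eq_sum_blockMeas ω (Nat.lt_succ_self (n + 1)), sum_range_succ',
    sum_eq_zero fun g hg => absurd (mem_Icc_of_mem_surjs n.succ_pos hg) (by simp), zero_div,
    add_zero]

theorem sum_blockMeas_div_factorial_succ (n l : ℕ) (y : Fin (n + 1) → X) :
    (∑ G ∈ surjs (n + 1) (l + 1), blockMeas ω G y) / (l + 1).factorial =
      ∑ G ∈ surjs (n + 1) (l + 1),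
        fiberCard G (Fin.last l) / ((n + 1) * l.factorial) * blockMeas ω G y := by
  have h := card_mul_sum_fiberCard_mul (fun G => blockMeas ω G y) (blockMeas_perm_comp ω · · y)
    (Fin.last l)
  simp only [div_mul_eq_mul_div, ← sum_div]
  rw [Nat.factorial_succ, div_eq_div_iff (by positivity) (by positivity)]
  push_cast at h ⊢
  linear_combination (-(l.factorial : ℝ)) * h

theorem tensFun_touchardMeas_diagMeas {k m N : ℕ} (hm : 0 < m) (hk : k < N)
    (z : Fin (k + m) → X) :
    tensFun (touchardMeas ω k) (diagMeas ω m) z =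
      ∑ l ∈ range N, (∑ h ∈ surjs k l,
        blockMeas ω (blockAppend h fun _ : Fin m => (0 : Fin 1)) z) / l.factorial := by
  rw [tensFun, touchardMeas_eq_sum_blockMeas ω hk, diagMeas_eq_blockMeas ω hm, sum_mul]
  refine sum_congr rfl fun l _ => ?_
  rw [div_mul_eq_mul_div, sum_mul]
  simp_rw [blockMeas_blockAppend]

theorem symmFun_tensFun_touchardMeas_diagMeas {k m N : ℕ} (hm : 0 < m) (hN : k + m = N)
    (y : Fin N → X) :
    symmFun N (castFun hN (tensFun (touchardMeas ω k) (diagMeas ω m))) y =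
      ∑ l ∈ range N, (k.factorial * m.factorial : ℝ) / (N.factorial * l.factorial) *
        ∑ G ∈ (surjs N (l + 1)).filter (fun G => fiberCard G (Fin.last l) = m),
          blockMeas ω G y := by
  simp_rw [symmFun_castFun, tensFun_touchardMeas_diagMeas ω hm (show k < N by omega),
    blockMeas_comp_equiv]
  rw [sum_comm, sum_div]
  refine sum_congr rfl fun l _ => ?_
  rw [← sum_div, sum_equiv_sum_surjs_blockAppend hm hN fun G => blockMeas ω G y]
  ring

theorem choose_mul_symmFun_tensFun_touchardMeas_diagMeas {n k : ℕ} (hk : k ≤ n)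
    (hN : k + (n + 1 - k) = n + 1) (y : Fin (n + 1) → X) :
    n.choose k * symmFun (n + 1)
        (castFun hN (tensFun (touchardMeas ω k) (diagMeas ω (n + 1 - k)))) y =
      ∑ l ∈ range (n + 1),
        ∑ G ∈ (surjs (n + 1) (l + 1)).filter (fun G => fiberCard G (Fin.last l) = n + 1 - k),
          fiberCard G (Fin.last l) / ((n + 1) * l.factorial) * blockMeas ω G y := by
  have hcoef : (n.choose k * k.factorial * (n + 1 - k).factorial : ℝ) =
      n.factorial * (n + 1 - k : ℕ) := by
    exact_mod_cast choose_mul_factorial_mul_factorial_succ_sub hk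
  rw [symmFun_tensFun_touchardMeas_diagMeas ω (by omega) hN, mul_sum]
  refine sum_congr rfl fun l _ => ?_
  rw [mul_sum, mul_sum]
  refine sum_congr rfl fun G hG => ?_
  rw [(mem_filter.mp hG).2, Nat.factorial_succ, Nat.cast_mul, Nat.cast_succ]
  field_simp
  rw [hcoef]
  ring

end Touchard

/-- recurrence for the Touchard measures:
`T_{n+1}(ω) = Σ_{k=0}^{n} C(n,k) · Sym(T_k(ω) ⊗ ω^{[n+1−k]})`. -/
theorem touchard_recurrence
    {X : Type*} [Fintype X] [DecidableEq X] (ω : X → ℝ) (n : ℕ) (y : Fin (n + 1) → X) :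
    touchardMeas ω (n + 1) y
      = ∑ k ∈ (Finset.range (n + 1)).attach,
          (n.choose k.1 : ℝ) *
            symmFun (n + 1)
              (castFun (by have := Finset.mem_range.mp k.2; omega)
                (tensFun (touchardMeas ω k.1) (diagMeas ω (n + 1 - k.1)))) y := by
  set w : (l : ℕ) → (Fin (n + 1) → Fin (l + 1)) → ℝ := fun l G =>
    fiberCard G (Fin.last l) / ((n + 1) * l.factorial) * blockMeas ω G y
  calc touchardMeas ω (n + 1) y
      = ∑ l ∈ range (n + 1), ∑ G ∈ surjs (n + 1) (l + 1), w l G := by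
        simp_rw [touchardMeas_succ_eq_sum_blockMeas, sum_blockMeas_div_factorial_succ, w]
    _ = ∑ k ∈ range (n + 1), ∑ l ∈ range (n + 1), ∑ G ∈ (surjs (n + 1) (l + 1)).filter
          (fun G => fiberCard G (Fin.last l) = n + 1 - k), w l G := by
        rw [sum_comm]
        simp_rw [sum_range_sum_filter_fiberCard_eq_sub]
    _ = _ := by
        rw [← sum_attach]
        exact sum_congr rfl fun k _ => (choose_mul_symmFun_tensFun_touchardMeas_diagMeas ω
          (Nat.lt_succ_iff.mp (mem_range.mp k.2)) _ y).symm
end
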